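/- Let T > 0, let A, B ∈ ℝ^{2×2}, C ∈ ℝ², Q ∈ ℝ^{2×2} symmetric positive semidefinite, R ∈ ℝ^{2×2} symmetric positive definite, φ ∈ ℝ^{2×2} symmetric, L : [0,T] → ℝ² continuous, and let σ̂₁₁, σ̂₂₂ ≥ 0. Suppose P : [0,T] → ℝ^{2×2} (symmetric-valued), Ψ : [0,T] → ℝ² and χ : [0,T] → ℝ are differentiable and satisfy: P'(t) + P(t)A + AᵀP(t) − P(t)BR⁻¹BᵀP(t) + Q + P̃(t) = 0 with P(T) = φ, where P̃(t) is the diagonal matrix diag(σ̂₁₁² P₁₁(t), σ̂₂₂² P₂₂(t)); Ψ'(t) + AᵀΨ(t) + P(t)C − P(t)BR⁻¹BᵀΨ(t) + L(t) = 0 with Ψ(T) = 0; and χ'(t) + Ψ(t)ᵀC − (1/2)Ψ(t)ᵀBR⁻¹BᵀΨ(t) = 0 with χ(T) = 0. Define v(X,t) = (1/2)XᵀP(t)X + Ψ(t)ᵀX + χ(t). Then for every X = (X₁,X₂) ∈ ℝ² and t ∈ [0,T): ∂ₜv(X,t) + inf over u ∈ ℝ² of [ (P(t)X + Ψ(t))ᵀ(AX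 + Bu + C) + (1/2)XᵀQX + (1/2)uᵀRu + L(t)ᵀX ] + (1/2)( σ̂₁₁² X₁² ∂²v/∂X₁²(X,t) + σ̂₂₂² X₂² ∂²v/∂X₂²(X,t) ) = 0, the infimum is attained at u*(X,t) = −R⁻¹Bᵀ(P(t)X + Ψ(t)), and v(X,T) = (1/2)XᵀφX. -/

import Mathlib

/-!
Since `v` is quadratic in `X`, everything reduces to matrix algebra at a fixed time `t`.
With `z = P X + Ψ`, completing the square in `u` (using `R` symmetric and invertible) gives
`H u = H u* + ½ (u - u*)ᵀ R (u - u*)`, so `u*` is the minimiser and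
`H u* = zᵀ(A X + C) - ½ zᵀ B R⁻¹ Bᵀ z + ½ XᵀQX + LᵀX`. The time derivative of `v` is
`½ XᵀP'X + Ψ'ᵀX + χ'`; substituting the three backward equations, and using the symmetry of `P`
and of `B R⁻¹ Bᵀ`, it equals `-(H u* + ½ XᵀP̃X)`, and `½ XᵀP̃X` is exactly the Itô term
`½ Σ σᵢᵢ² Xᵢ² ∂²v/∂Xᵢ²` because `∂²v/∂Xᵢ² = Pᵢᵢ`.
-/

open Matrix Set

namespace Matrix

variable {m n : Type*} [Fintype m] [Fintype n]

theorem IsSymm.mulVec_dotProduct {M : Matrix n n ℝ} (hM : M.IsSymm) (v w : n → ℝ) :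
    M *ᵥ v ⬝ᵥ w = v ⬝ᵥ (M *ᵥ w) := by
  rw [dotProduct_mulVec, ← mulVec_transpose, hM.eq, dotProduct_comm]

theorem IsSymm.dotProduct_mulVec_comm {M : Matrix n n ℝ} (hM : M.IsSymm) (v w : n → ℝ) :
    v ⬝ᵥ (M *ᵥ w) = w ⬝ᵥ (M *ᵥ v) := by
  rw [← hM.mulVec_dotProduct, dotProduct_comm]

theorem transpose_mulVec_dotProduct (M : Matrix m n ℝ) (v : m → ℝ) (w : n → ℝ) :
    Mᵀ *ᵥ v ⬝ᵥ w = v ⬝ᵥ (M *ᵥ w) := by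
  rw [mulVec_transpose, dotProduct_mulVec, dotProduct_comm]

theorem IsSymm.mul_mul_transpose {ι κ α : Type*} [Fintype κ] [CommSemiring α]
    {M : Matrix κ κ α} (hM : M.IsSymm) (B : Matrix ι κ α) : (B * M * Bᵀ).IsSymm := by
  simp only [IsSymm, transpose_mul, transpose_transpose, hM.eq, Matrix.mul_assoc]

theorem add_dotProduct_mulVec_add (M : Matrix n n ℝ) (v w : n → ℝ) :
    (v + w) ⬝ᵥ (M *ᵥ (v + w)) =
      v ⬝ᵥ (M *ᵥ v) + v ⬝ᵥ (M *ᵥ w) + w ⬝ᵥ (M *ᵥ v) + w ⬝ᵥ (M *ᵥ w) := by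
  simp only [mulVec_add, dotProduct_add, add_dotProduct]
  ring

theorem dotProduct_mulVec_add_half_quadratic_eq [DecidableEq n] {R : Matrix n n ℝ}
    (hR : R.IsSymm) (hdet : IsUnit R.det) (B : Matrix m n ℝ) (z : m → ℝ) (u : n → ℝ) :
    z ⬝ᵥ (B *ᵥ u) + 1 / 2 * (u ⬝ᵥ (R *ᵥ u)) =
      -(1 / 2) * (z ⬝ᵥ ((B * R⁻¹ * Bᵀ) *ᵥ z))
        + 1 / 2 * ((u + (R⁻¹ * Bᵀ) *ᵥ z) ⬝ᵥ (R *ᵥ (u + (R⁻¹ * Bᵀ) *ᵥ z))) := by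
  set w := (R⁻¹ * Bᵀ) *ᵥ z
  have hRw : R *ᵥ w = Bᵀ *ᵥ z := by
    rw [mulVec_mulVec, ← Matrix.mul_assoc, mul_nonsing_inv R hdet, Matrix.one_mul]
  have hzB : ∀ x, z ⬝ᵥ (B *ᵥ x) = x ⬝ᵥ (R *ᵥ w) := fun x => by
    rw [hRw, dotProduct_comm x, transpose_mulVec_dotProduct]
  have hS : z ⬝ᵥ ((B * R⁻¹ * Bᵀ) *ᵥ z) = w ⬝ᵥ (R *ᵥ w) := by
    rw [Matrix.mul_assoc, ← mulVec_mulVec, hzB]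
  rw [add_dotProduct_mulVec_add, hR.dotProduct_mulVec_comm w u, hS, hzB]
  ring

theorem half_dotProduct_mulVec_add_eq_neg_hamiltonian_of_riccati
    {P P' A Q N S : Matrix n n ℝ} {Ψ Ψ' C L : n → ℝ} {χ' : ℝ}
    (hP : P.IsSymm) (hS : S.IsSymm)
    (hPeq : P' + P * A + Aᵀ * P - P * S * P + Q + N = 0)
    (hΨeq : Ψ' + Aᵀ *ᵥ Ψ + P *ᵥ C - (P * S) *ᵥ Ψ + L = 0)
    (hχeq : χ' + Ψ ⬝ᵥ C - 1 / 2 * (Ψ ⬝ᵥ (S *ᵥ Ψ)) = 0) (x : n → ℝ) :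
    1 / 2 * (x ⬝ᵥ (P' *ᵥ x)) + Ψ' ⬝ᵥ x + χ' =
      -((P *ᵥ x + Ψ) ⬝ᵥ (A *ᵥ x + C) - 1 / 2 * ((P *ᵥ x + Ψ) ⬝ᵥ (S *ᵥ (P *ᵥ x + Ψ)))
        + 1 / 2 * (x ⬝ᵥ (Q *ᵥ x)) + L ⬝ᵥ x + 1 / 2 * (x ⬝ᵥ (N *ᵥ x))) := by
  have hP' : P' = -(P * A + Aᵀ * P - P * S * P + Q + N) := by
    rw [← sub_eq_zero, ← hPeq]; abel
  have hΨ' : Ψ' = -(Aᵀ *ᵥ Ψ + P *ᵥ C - (P * S) *ᵥ Ψ + L) := by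
    rw [← sub_eq_zero, ← hΨeq]; abel
  rw [hP', hΨ', show χ' = -(Ψ ⬝ᵥ C) + 1 / 2 * (Ψ ⬝ᵥ (S *ᵥ Ψ)) by linarith]
  simp only [neg_mulVec, add_mulVec, sub_mulVec, ← mulVec_mulVec, dotProduct_add, dotProduct_sub,
    dotProduct_neg, add_dotProduct, neg_dotProduct, sub_dotProduct, mulVec_add]
  have hAP : x ⬝ᵥ (Aᵀ *ᵥ (P *ᵥ x)) = P *ᵥ x ⬝ᵥ A *ᵥ x := by
    rw [dotProduct_comm, transpose_mulVec_dotProduct, dotProduct_comm]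
  linarith [hP.mulVec_dotProduct x (A *ᵥ x), hP.mulVec_dotProduct x (S *ᵥ (P *ᵥ x)),
    hP.mulVec_dotProduct C x, hP.mulVec_dotProduct (S *ᵥ Ψ) x,
    hS.dotProduct_mulVec_comm Ψ (P *ᵥ x), transpose_mulVec_dotProduct A Ψ x,
    dotProduct_comm C (P *ᵥ x), dotProduct_comm (S *ᵥ Ψ) (P *ᵥ x)]

end Matrix

theorem deriv_deriv_quadratic (a b c r : ℝ) :
    deriv (deriv fun s : ℝ => a * s ^ 2 + b * s + c) r = 2 * a := by
  have h : deriv (fun s : ℝ => a * s ^ 2 + b * s + c) = fun s => 2 * a * s + b := by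
    ext s
    exact ((((hasDerivAt_pow 2 s).const_mul a).add ((hasDerivAt_id s).const_mul b)).add_const c
      |>.deriv.trans (by simp; ring))
  rw [h]
  exact (((hasDerivAt_id r).const_mul (2 * a)).add_const b).deriv.trans (by simp)

section Calculus

variable {m n : Type*} [Fintype m] [Fintype n]

theorem deriv_deriv_quadratic_along_line (M : Matrix n n ℝ) (b : n → ℝ) (c : ℝ)
    (x w : n → ℝ) (r : ℝ) :
    deriv (deriv fun s : ℝ =>
      1 / 2 * ((x + s • w) ⬝ᵥ (M *ᵥ (x + s • w))) + b ⬝ᵥ (x + s • w) + c) r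
      = w ⬝ᵥ (M *ᵥ w) := by
  have h : (fun s : ℝ => 1 / 2 * ((x + s • w) ⬝ᵥ (M *ᵥ (x + s • w))) + b ⬝ᵥ (x + s • w) + c)
      = fun s => 1 / 2 * (w ⬝ᵥ (M *ᵥ w)) * s ^ 2
          + (1 / 2 * (x ⬝ᵥ (M *ᵥ w) + w ⬝ᵥ (M *ᵥ x)) + b ⬝ᵥ w) * s
          + (1 / 2 * (x ⬝ᵥ (M *ᵥ x)) + b ⬝ᵥ x + c) := by
    ext s
    simp only [add_dotProduct_mulVec_add, mulVec_smul, dotProduct_smul, smul_dotProduct,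
      dotProduct_add, smul_eq_mul]
    ring
  rw [h, deriv_deriv_quadratic]
  ring

theorem hasDerivWithinAt_dotProduct_mulVec {P : ℝ → Matrix m n ℝ} {P' : Matrix m n ℝ}
    {s : Set ℝ} {t : ℝ} (hP : ∀ i j, HasDerivWithinAt (fun τ => P τ i j) (P' i j) s t)
    (x : m → ℝ) (y : n → ℝ) :
    HasDerivWithinAt (fun τ => x ⬝ᵥ (P τ *ᵥ y)) (x ⬝ᵥ (P' *ᵥ y)) s t := by
  simp only [dotProduct, mulVec]
  exact HasDerivWithinAt.fun_sum fun i _ =>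
    (HasDerivWithinAt.fun_sum fun j _ => (hP i j).mul_const (y j)).const_mul (x i)

theorem HasDerivWithinAt.dotProduct_const {Ψ : ℝ → n → ℝ} {Ψ' : n → ℝ} {s : Set ℝ} {t : ℝ}
    (hΨ : HasDerivWithinAt Ψ Ψ' s t) (x : n → ℝ) :
    HasDerivWithinAt (fun τ => Ψ τ ⬝ᵥ x) (Ψ' ⬝ᵥ x) s t := by
  simp only [dotProduct]
  exact HasDerivWithinAt.fun_sum fun i _ => (hasDerivWithinAt_pi.mp hΨ i).mul_const (x i)

end Calculus

theorem stmt_4_general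
    (T : ℝ)
    (A B : Matrix (Fin 2) (Fin 2) ℝ) (C : Fin 2 → ℝ)
    (Q R φ : Matrix (Fin 2) (Fin 2) ℝ)
    (hR : R.PosDef)
    (L : ℝ → Fin 2 → ℝ)
    (σ11 σ22 : ℝ)
    (P P' : ℝ → Matrix (Fin 2) (Fin 2) ℝ)
    (Ψ Ψ' : ℝ → Fin 2 → ℝ) (χ χ' : ℝ → ℝ)
    (hPsymm : ∀ t ∈ Icc (0:ℝ) T, (P t).IsSymm)
    (hPdiff : ∀ t ∈ Icc (0:ℝ) T, ∀ i j,
      HasDerivWithinAt (fun s => P s i j) (P' t i j) (Icc 0 T) t)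
    (hΨdiff : ∀ t ∈ Icc (0:ℝ) T, HasDerivWithinAt Ψ (Ψ' t) (Icc 0 T) t)
    (hχdiff : ∀ t ∈ Icc (0:ℝ) T, HasDerivWithinAt χ (χ' t) (Icc 0 T) t)
    (hPeq : ∀ t ∈ Icc (0:ℝ) T,
      P' t + P t * A + Aᵀ * P t - P t * B * R⁻¹ * Bᵀ * P t + Q
        + Matrix.diagonal ![σ11 ^ 2 * P t 0 0, σ22 ^ 2 * P t 1 1] = 0)
    (hPT : P T = φ)
    (hΨeq : ∀ t ∈ Icc (0:ℝ) T,
      Ψ' t + Aᵀ *ᵥ Ψ t + P t *ᵥ C - (P t * B * R⁻¹ * Bᵀ) *ᵥ Ψ t + L t = 0)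
    (hΨT : Ψ T = 0)
    (hχeq : ∀ t ∈ Icc (0:ℝ) T,
      χ' t + Ψ t ⬝ᵥ C - (1 / 2) * (Ψ t ⬝ᵥ ((B * R⁻¹ * Bᵀ) *ᵥ Ψ t)) = 0)
    (hχT : χ T = 0) :
    ∀ X : Fin 2 → ℝ, ∀ t ∈ Ico (0:ℝ) T,
      let v : (Fin 2 → ℝ) → ℝ → ℝ := fun Y s =>
        (1 / 2) * (Y ⬝ᵥ (P s *ᵥ Y)) + Ψ s ⬝ᵥ Y + χ s
      let H : (Fin 2 → ℝ) → ℝ := fun u =>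
        (P t *ᵥ X + Ψ t) ⬝ᵥ (A *ᵥ X + B *ᵥ u + C)
          + (1 / 2) * (X ⬝ᵥ (Q *ᵥ X)) + (1 / 2) * (u ⬝ᵥ (R *ᵥ u)) + L t ⬝ᵥ X
      let ustar : Fin 2 → ℝ := -((R⁻¹ * Bᵀ) *ᵥ (P t *ᵥ X + Ψ t))
      let d2 : Fin 2 → ℝ := fun i =>
        deriv (deriv fun s : ℝ => v (X + s • (Pi.single i 1 : Fin 2 → ℝ)) t) 0
      (∀ u : Fin 2 → ℝ, H ustar ≤ H u) ∧
        HasDerivWithinAt (fun s => v X s)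
          (-(H ustar + (1 / 2) * (σ11 ^ 2 * (X 0) ^ 2 * d2 0 + σ22 ^ 2 * (X 1) ^ 2 * d2 1)))
          (Icc 0 T) t ∧
        v X T = (1 / 2) * (X ⬝ᵥ (φ *ᵥ X)) := by
  intro X t ht v H ustar d2
  have ht' : t ∈ Icc 0 T := Ico_subset_Icc_self ht
  have hRsymm : R.IsSymm := isHermitian_iff_isSymm.mp hR.1
  set S := B * R⁻¹ * Bᵀ with hSdef
  set z := P t *ᵥ X + Ψ t
  have hH : ∀ u, H u = z ⬝ᵥ (A *ᵥ X + C) - 1 / 2 * (z ⬝ᵥ (S *ᵥ z))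
      + 1 / 2 * (X ⬝ᵥ (Q *ᵥ X)) + L t ⬝ᵥ X + 1 / 2 * ((u - ustar) ⬝ᵥ (R *ᵥ (u - ustar))) := by
    intro u
    have hsq := dotProduct_mulVec_add_half_quadratic_eq hRsymm hR.det_pos.ne'.isUnit B z u
    simp only [H, ustar, sub_neg_eq_add, dotProduct_add] at hsq ⊢
    linarith
  refine ⟨fun u => ?_, ?_, by simp [v, hPT, hΨT, hχT]⟩
  · rw [hH u, hH ustar, sub_self, zero_dotProduct]
    have hpos : 0 ≤ (u - ustar) ⬝ᵥ (R *ᵥ (u - ustar)) := by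
      simpa using hR.posSemidef.dotProduct_mulVec_nonneg (u - ustar)
    linarith
  · have hd2 : ∀ i, d2 i = P t i i := fun i =>
      (deriv_deriv_quadratic_along_line (P t) (Ψ t) (χ t) X _ 0).trans (by simp)
    have hval := half_dotProduct_mulVec_add_eq_neg_hamiltonian_of_riccati (hPsymm t ht')
      (hRsymm.inv.mul_mul_transpose B)
      (by simpa only [hSdef, Matrix.mul_assoc] using hPeq t ht')
      (by simpa only [hSdef, Matrix.mul_assoc] using hΨeq t ht') (hχeq t ht') X
    have hdiag : X ⬝ᵥ (diagonal ![σ11 ^ 2 * P t 0 0, σ22 ^ 2 * P t 1 1] *ᵥ X)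
        = σ11 ^ 2 * X 0 ^ 2 * P t 0 0 + σ22 ^ 2 * X 1 ^ 2 * P t 1 1 := by
      simp [mulVec_diagonal, dotProduct, Fin.sum_univ_two]; ring
    refine ((((hasDerivWithinAt_dotProduct_mulVec (hPdiff t ht') X X).const_mul (1 / 2)).add
      ((hΨdiff t ht').dotProduct_const X)).add (hχdiff t ht')).congr_deriv ?_
    rw [hval, hH ustar, sub_self, zero_dotProduct, hd2, hd2, hdiag]
    ring

theorem stmt_4
    (T : ℝ) (hT : 0 < T)
    (A B : Matrix (Fin 2) (Fin 2) ℝ) (C : Fin 2 → ℝ)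
    (Q R φ : Matrix (Fin 2) (Fin 2) ℝ)
    (hQ : Q.PosSemidef) (hR : R.PosDef) (hφ : φ.IsSymm)
    (L : ℝ → Fin 2 → ℝ) (hL : ContinuousOn L (Icc 0 T))
    (σ11 σ22 : ℝ) (hσ11 : 0 ≤ σ11) (hσ22 : 0 ≤ σ22)
    (P P' : ℝ → Matrix (Fin 2) (Fin 2) ℝ)
    (Ψ Ψ' : ℝ → Fin 2 → ℝ) (χ χ' : ℝ → ℝ)
    (hPsymm : ∀ t ∈ Icc (0:ℝ) T, (P t).IsSymm)
    (hPdiff : ∀ t ∈ Icc (0:ℝ) T, ∀ i j,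
      HasDerivWithinAt (fun s => P s i j) (P' t i j) (Icc 0 T) t)
    (hΨdiff : ∀ t ∈ Icc (0:ℝ) T, HasDerivWithinAt Ψ (Ψ' t) (Icc 0 T) t)
    (hχdiff : ∀ t ∈ Icc (0:ℝ) T, HasDerivWithinAt χ (χ' t) (Icc 0 T) t)
    (hPeq : ∀ t ∈ Icc (0:ℝ) T,
      P' t + P t * A + Aᵀ * P t - P t * B * R⁻¹ * Bᵀ * P t + Q
        + Matrix.diagonal ![σ11 ^ 2 * P t 0 0, σ22 ^ 2 * P t 1 1] = 0)
    (hPT : P T = φ)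
    (hΨeq : ∀ t ∈ Icc (0:ℝ) T,
      Ψ' t + Aᵀ *ᵥ Ψ t + P t *ᵥ C - (P t * B * R⁻¹ * Bᵀ) *ᵥ Ψ t + L t = 0)
    (hΨT : Ψ T = 0)
    (hχeq : ∀ t ∈ Icc (0:ℝ) T,
      χ' t + Ψ t ⬝ᵥ C - (1 / 2) * (Ψ t ⬝ᵥ ((B * R⁻¹ * Bᵀ) *ᵥ Ψ t)) = 0)
    (hχT : χ T = 0) :
    ∀ X : Fin 2 → ℝ, ∀ t ∈ Ico (0:ℝ) T,
      let v : (Fin 2 → ℝ) → ℝ → ℝ := fun Y s =>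
        (1 / 2) * (Y ⬝ᵥ (P s *ᵥ Y)) + Ψ s ⬝ᵥ Y + χ s
      let H : (Fin 2 → ℝ) → ℝ := fun u =>
        (P t *ᵥ X + Ψ t) ⬝ᵥ (A *ᵥ X + B *ᵥ u + C)
          + (1 / 2) * (X ⬝ᵥ (Q *ᵥ X)) + (1 / 2) * (u ⬝ᵥ (R *ᵥ u)) + L t ⬝ᵥ X
      let ustar : Fin 2 → ℝ := -((R⁻¹ * Bᵀ) *ᵥ (P t *ᵥ X + Ψ t))
      let d2 : Fin 2 → ℝ := fun i =>
        deriv (deriv fun s : ℝ => v (X + s • (Pi.single i 1 : Fin 2 → ℝ)) t) 0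
      (∀ u : Fin 2 → ℝ, H ustar ≤ H u) ∧
        HasDerivWithinAt (fun s => v X s)
          (-(H ustar + (1 / 2) * (σ11 ^ 2 * (X 0) ^ 2 * d2 0 + σ22 ^ 2 * (X 1) ^ 2 * d2 1)))
          (Icc 0 T) t ∧
        v X T = (1 / 2) * (X ⬝ᵥ (φ *ᵥ X)) :=
  stmt_4_general T A B C Q R φ hR L σ11 σ22 P P' Ψ Ψ' χ χ' hPsymm hPdiff hΨdiff hχdiff hPeq hPT hΨeq
    hΨT hχeq hχT
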